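/- arXiv:1607.06417 — 7 statements merged into one kernel-verified Lean document; each statement's English description precedes it below -/
import Mathlib

section
/- If Y_C ≠ 0, 1 + ρ_L·exp(−2Γd) ≠ 0, α = Re(Γ) > 0 and ρ_L ≠ 0, then the distance can be recovered from the input reflection coefficient by the formula d = (log|ρ_L| − log|ρ(d)|)/(2α) (equation (3) of the paper). -/
/-- Network admittance seen at distance `d` from a load with reflection
coefficient `ρL`, on a line with characteristic admittance `YC` and
propagation constant `Γ`. -/
noncomputable def Ynet (YC ρL Γ : ℂ) (d : ℝ) : ℂ :=
  YC * (1 - ρL * Complex.exp (-2 * Γ * d)) / (1 + ρL * Complex.exp (-2 * Γ * d))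

/-- Input reflection coefficient at distance `d`. -/
noncomputable def ρin (YC ρL Γ : ℂ) (d : ℝ) : ℂ :=
  (YC - Ynet YC ρL Γ d) / (YC + Ynet YC ρL Γ d)

theorem sub_div_add_mul_one_sub_div_one_add {K : Type*} [Field K] [NeZero (2 : K)] {Y z : K}
    (hY : Y ≠ 0) (hz : 1 + z ≠ 0) :
    (Y - Y * (1 - z) / (1 + z)) / (Y + Y * (1 - z) / (1 + z)) = z := by
  have hsub : Y - Y * (1 - z) / (1 + z) = 2 * Y * z / (1 + z) := by
    field_simp; ring
  have hadd : Y + Y * (1 - z) / (1 + z) = 2 * Y / (1 + z) := by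
    field_simp; ring
  rw [hsub, hadd, div_div_div_cancel_right₀ hz,
    mul_div_cancel_left₀ z (mul_ne_zero two_ne_zero hY)]

theorem ρin_eq (YC ρL Γ : ℂ) (d : ℝ) (hYC : YC ≠ 0)
    (hden : 1 + ρL * Complex.exp (-2 * Γ * d) ≠ 0) :
    ρin YC ρL Γ d = ρL * Complex.exp (-2 * Γ * d) :=
  sub_div_add_mul_one_sub_div_one_add hYC hden

theorem norm_exp_neg_two_mul (Γ : ℂ) (d : ℝ) :
    ‖Complex.exp (-2 * Γ * d)‖ = Real.exp (-(2 * Γ.re * d)) := by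
  rw [Complex.norm_exp]
  congr 1
  simp [Complex.mul_re]

theorem log_norm_ρin (YC ρL Γ : ℂ) (d : ℝ) (hYC : YC ≠ 0)
    (hden : 1 + ρL * Complex.exp (-2 * Γ * d) ≠ 0) (hρL : ρL ≠ 0) :
    Real.log ‖ρin YC ρL Γ d‖ = Real.log ‖ρL‖ - 2 * Γ.re * d := by
  rw [ρin_eq YC ρL Γ d hYC hden, norm_mul, norm_exp_neg_two_mul,
    Real.log_mul (norm_ne_zero_iff.mpr hρL) (Real.exp_ne_zero _), Real.log_exp]
  ring

/-- Equation (3): the distance is recovered from the modulus of the input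
reflection coefficient on a lossy line with a non-matched load. -/
theorem distance_from_reflection (YC ρL Γ : ℂ) (d : ℝ) (hYC : YC ≠ 0)
    (hden : 1 + ρL * Complex.exp (-2 * Γ * d) ≠ 0)
    (hα : 0 < Γ.re) (hρL : ρL ≠ 0) :
    d = (Real.log ‖ρL‖ - Real.log ‖ρin YC ρL Γ d‖) /
        (2 * Γ.re) := by
  rw [log_norm_ρin YC ρL Γ d hYC hden hρL, sub_sub_cancel,
    mul_div_cancel_left₀ d (by positivity : 2 * Γ.re ≠ 0)]
end

section
/- Assume Y_C ≠ 0, ρ_L ≠ 0 and α = Re(Γ) > 0 (a real, lossy line). Then the network admittance determines the distance uniquely: for all d₁, d₂ ≥ 0 with 1 + ρ_L·exp(−2Γd₁) ≠ 0 and 1 + ρ_L·exp(−2Γd₂) ≠ 0, if Y(d₁) = Y(d₂) then d₁ = d₂. -/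
/-! The admittance is `YC` times the Möbius transform `z ↦ (1 - z) / (1 + z)` of the reflection
coefficient `z = ρL · exp (-2Γd)` at distance `d`, and this transform is injective. On a lossy line
`‖exp (-2Γd)‖ = exp (-2 (re Γ) d)` is strictly monotone in `d`, so `z` in turn determines `d`. -/

theorem one_sub_div_one_add_injective {K : Type*} [Field K] [NeZero (2 : K)] {z w : K}
    (hz : 1 + z ≠ 0) (hw : 1 + w ≠ 0) (h : (1 - z) / (1 + z) = (1 - w) / (1 + w)) : z = w := by
  rw [div_eq_div_iff hz hw] at h
  have h2 : (2 : K) * (w - z) = 0 := by linear_combination h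
  exact (sub_eq_zero.mp ((mul_eq_zero.mp h2).resolve_left two_ne_zero)).symm

theorem Complex.exp_mul_ofReal_injective {c : ℂ} (hc : c.re ≠ 0) :
    Function.Injective fun t : ℝ => Complex.exp (c * t) := by
  intro s t hst
  have hnorm := congrArg (‖·‖) hst
  simp only [Complex.norm_exp, Complex.re_mul_ofReal, Real.exp_eq_exp] at hnorm
  exact mul_left_cancel₀ hc hnorm

/-- On a real lossy line with a non-matched load, the network admittance
determines the distance uniquely. -/
theorem admittance_determines_distance (YC ρL Γ : ℂ) (hYC : YC ≠ 0)
    (hρL : ρL ≠ 0) (hα : 0 < Γ.re) :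
    ∀ d₁ d₂ : ℝ, 0 ≤ d₁ → 0 ≤ d₂ →
      1 + ρL * Complex.exp (-2 * Γ * d₁) ≠ 0 →
      1 + ρL * Complex.exp (-2 * Γ * d₂) ≠ 0 →
      Ynet YC ρL Γ d₁ = Ynet YC ρL Γ d₂ → d₁ = d₂ := by
  intro d₁ d₂ _ _ h₁ h₂ hY
  simp only [Ynet, mul_div_assoc] at hY
  have hz := one_sub_div_one_add_injective h₁ h₂ (mul_left_cancel₀ hYC hY)
  have hre : (-2 * Γ).re ≠ 0 := by simp [hα.ne']
  exact Complex.exp_mul_ofReal_injective hre (mul_left_cancel₀ hρL hz)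
end

section
/- Assume Y_C ≠ 0, ρ_L ≠ 0 and α = Re(Γ) > 0. Then the modulus of the input reflection coefficient is a strictly decreasing function of the distance: for all d₁, d₂ ≥ 0 with d₁ < d₂ and 1 + ρ_L·exp(−2Γd₁) ≠ 0 and 1 + ρ_L·exp(−2Γd₂) ≠ 0, one has |ρ(d₂)| < |ρ(d₁)|. -/
lemma reflection_of_cayley_admittance {K : Type*} [Field K] [NeZero (2 : K)] {Y u : K}
    (hY : Y ≠ 0) (hu : 1 + u ≠ 0) :
    (Y - Y * (1 - u) / (1 + u)) / (Y + Y * (1 - u) / (1 + u)) = u := by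
  have hsum : Y + Y * (1 - u) / (1 + u) = 2 * Y / (1 + u) := by
    field_simp
    ring
  have hdiff : Y - Y * (1 - u) / (1 + u) = 2 * Y / (1 + u) * u := by
    field_simp
    ring
  rw [hsum, hdiff, mul_div_cancel_left₀ u (by simp [hY, hu, two_ne_zero])]

lemma ρin_eq_mul_exp (YC ρL Γ : ℂ) (d : ℝ) (hYC : YC ≠ 0)
    (h : 1 + ρL * Complex.exp (-2 * Γ * d) ≠ 0) :
    ρin YC ρL Γ d = ρL * Complex.exp (-2 * Γ * d) :=
  reflection_of_cayley_admittance hYC h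

lemma norm_mul_exp_neg_two_mul (ρL Γ : ℂ) (d : ℝ) :
    ‖ρL * Complex.exp (-2 * Γ * d)‖ = ‖ρL‖ * Real.exp (-2 * Γ.re * d) := by
  rw [norm_mul, Complex.norm_exp]
  congr 2
  simp

lemma strictAnti_norm_mul_exp_neg_two_mul {ρL Γ : ℂ} (hρL : ρL ≠ 0) (hα : 0 < Γ.re) :
    StrictAnti fun d : ℝ => ‖ρL * Complex.exp (-2 * Γ * d)‖ := by
  intro d₁ d₂ hlt
  simp only [norm_mul_exp_neg_two_mul]
  have hexp : Real.exp (-2 * Γ.re * d₂) < Real.exp (-2 * Γ.re * d₁) :=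
    Real.exp_lt_exp.mpr (by nlinarith)
  exact mul_lt_mul_of_pos_left hexp (norm_pos_iff.mpr hρL)

/-- On a real lossy line with a non-matched load, the modulus of the input
reflection coefficient is a strictly decreasing function of the distance. -/
theorem abs_reflection_strict_anti (YC ρL Γ : ℂ) (hYC : YC ≠ 0)
    (hρL : ρL ≠ 0) (hα : 0 < Γ.re) :
    ∀ d₁ d₂ : ℝ, 0 ≤ d₁ → 0 ≤ d₂ → d₁ < d₂ →
      1 + ρL * Complex.exp (-2 * Γ * d₁) ≠ 0 →
      1 + ρL * Complex.exp (-2 * Γ * d₂) ≠ 0 →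
      ‖ρin YC ρL Γ d₂‖ < ‖ρin YC ρL Γ d₁‖ := by
  intro d₁ d₂ _ _ hlt h₁ h₂
  rw [ρin_eq_mul_exp YC ρL Γ d₁ hYC h₁, ρin_eq_mul_exp YC ρL Γ d₂ hYC h₂]
  exact strictAnti_norm_mul_exp_neg_two_mul hρL hα hlt
end

section
/- Quadratic form of the two-node system: suppose the two equations of the system hold for some complex ρ_{L2}, with Y_C + Y_{L1} ≠ 0, 1 + ρ₁x ≠ 0, Y_C + Y₂ − Y_C·(1 − ρ₁x)/(1 + ρ₁x) ≠ 0 and 1 + ρ_{L2}x ≠ 0. Then, setting A = Y₁ − Y_{L1}, the quantity x = exp(−2Γd) satisfies the quadratic equation −Y₂·ρ₁·(Y_C + A)·x² + [(2Y_C − Y₂)·(Y_C + A) − (Y_C − A)·(2Y_C + Y₂)·ρ₁]·x − (Y_C − A)·Y₂ = 0, whose coefficients are polynomial functions of Y₁, Y₂, Y_C and Y_{L1}. -/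
/-! Clearing denominators turns the two equations into
`A (1 + ρ_{L2} x) = Y_C (1 - ρ_{L2} x)` and a linear relation between `ρ_{L2}` and `x`.
The first gives `ρ_{L2} x (Y_C + A) = Y_C - A`; multiplying the second by `x (Y_C + A)`
and substituting eliminates `ρ_{L2}`, leaving the quadratic in `x`. -/

section TwoNode

variable {K : Type*}

theorem reflection_mul_eq_of_eq_div [Field K] {YC Y2 r x ρ : K} (hr : 1 + r * x ≠ 0)
    (hden : YC + Y2 - YC * (1 - r * x) / (1 + r * x) ≠ 0)
    (hρ : ρ = (YC - Y2 + YC * (1 - r * x) / (1 + r * x)) /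
      (YC + Y2 - YC * (1 - r * x) / (1 + r * x))) :
    ρ * ((YC + Y2) * (1 + r * x) - YC * (1 - r * x)) =
      (YC - Y2) * (1 + r * x) + YC * (1 - r * x) := by
  have hG : YC * (1 - r * x) / (1 + r * x) * (1 + r * x) = YC * (1 - r * x) :=
    div_mul_cancel₀ _ hr
  have hρ' := (eq_div_iff hden).1 hρ
  linear_combination (1 + r * x) * hρ' + (ρ + 1) * hG

theorem quadratic_of_cleared_equations [CommRing K] {A Y2 YC r ρ x : K}
    (h₁ : A * (1 + ρ * x) = YC * (1 - ρ * x))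
    (h₂ : ρ * ((YC + Y2) * (1 + r * x) - YC * (1 - r * x)) =
      (YC - Y2) * (1 + r * x) + YC * (1 - r * x)) :
    -Y2 * r * (YC + A) * x ^ 2 + ((2 * YC - Y2) * (YC + A) - (YC - A) * (2 * YC + Y2) * r) * x -
      (YC - A) * Y2 = 0 := by
  linear_combination (-(x * (YC + A))) * h₂ + ((2 * YC + Y2) * r * x + Y2) * h₁

end TwoNode

theorem two_node_quadratic_general (Y1 Y2 YC YL1 ρL2 Γ : ℂ) (d : ℝ)
    (h1 : 1 + (YC - YL1) / (YC + YL1) * Complex.exp (-2 * Γ * d) ≠ 0)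
    (h2 : YC + Y2 - YC * (1 - (YC - YL1) / (YC + YL1) * Complex.exp (-2 * Γ * d)) /
            (1 + (YC - YL1) / (YC + YL1) * Complex.exp (-2 * Γ * d)) ≠ 0)
    (h3 : 1 + ρL2 * Complex.exp (-2 * Γ * d) ≠ 0)
    (heq1 : Y1 = YC * (1 - ρL2 * Complex.exp (-2 * Γ * d)) /
              (1 + ρL2 * Complex.exp (-2 * Γ * d)) + YL1)
    (heq2 : ρL2 =
      (YC - Y2 + YC * (1 - (YC - YL1) / (YC + YL1) * Complex.exp (-2 * Γ * d)) /
          (1 + (YC - YL1) / (YC + YL1) * Complex.exp (-2 * Γ * d))) /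
      (YC + Y2 - YC * (1 - (YC - YL1) / (YC + YL1) * Complex.exp (-2 * Γ * d)) /
          (1 + (YC - YL1) / (YC + YL1) * Complex.exp (-2 * Γ * d)))) :
    -Y2 * ((YC - YL1) / (YC + YL1)) * (YC + (Y1 - YL1)) * Complex.exp (-2 * Γ * d) ^ 2 +
      ((2 * YC - Y2) * (YC + (Y1 - YL1)) -
          (YC - (Y1 - YL1)) * (2 * YC + Y2) * ((YC - YL1) / (YC + YL1))) *
        Complex.exp (-2 * Γ * d) -
      (YC - (Y1 - YL1)) * Y2 = 0 := by
  have hA : (Y1 - YL1) * (1 + ρL2 * Complex.exp (-2 * Γ * d)) =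
      YC * (1 - ρL2 * Complex.exp (-2 * Γ * d)) :=
    (eq_div_iff h3).1 (by rw [heq1]; ring)
  exact quadratic_of_cleared_equations hA (reflection_mul_eq_of_eq_div h1 h2 heq2)

/-- Quadratic form of the two-node system (equation (5)): if the two equations
of the system hold, then `x = exp (-2Γd)` satisfies a quadratic equation whose
coefficients are polynomial functions of `Y₁`, `Y₂`, `Y_C` and `Y_{L1}`. -/
theorem two_node_quadratic (Y1 Y2 YC YL1 ρL2 Γ : ℂ) (d : ℝ)
    (hL1 : YC + YL1 ≠ 0)
    (h1 : 1 + (YC - YL1) / (YC + YL1) * Complex.exp (-2 * Γ * d) ≠ 0)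
    (h2 : YC + Y2 - YC * (1 - (YC - YL1) / (YC + YL1) * Complex.exp (-2 * Γ * d)) /
            (1 + (YC - YL1) / (YC + YL1) * Complex.exp (-2 * Γ * d)) ≠ 0)
    (h3 : 1 + ρL2 * Complex.exp (-2 * Γ * d) ≠ 0)
    (heq1 : Y1 = YC * (1 - ρL2 * Complex.exp (-2 * Γ * d)) /
              (1 + ρL2 * Complex.exp (-2 * Γ * d)) + YL1)
    (heq2 : ρL2 =
      (YC - Y2 + YC * (1 - (YC - YL1) / (YC + YL1) * Complex.exp (-2 * Γ * d)) /
          (1 + (YC - YL1) / (YC + YL1) * Complex.exp (-2 * Γ * d))) /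
      (YC + Y2 - YC * (1 - (YC - YL1) / (YC + YL1) * Complex.exp (-2 * Γ * d)) /
          (1 + (YC - YL1) / (YC + YL1) * Complex.exp (-2 * Γ * d)))) :
    -Y2 * ((YC - YL1) / (YC + YL1)) * (YC + (Y1 - YL1)) * Complex.exp (-2 * Γ * d) ^ 2 +
      ((2 * YC - Y2) * (YC + (Y1 - YL1)) -
          (YC - (Y1 - YL1)) * (2 * YC + Y2) * ((YC - YL1) / (YC + YL1))) *
        Complex.exp (-2 * Γ * d) -
      (YC - (Y1 - YL1)) * Y2 = 0 :=
  two_node_quadratic_general Y1 Y2 YC YL1 ρL2 Γ d h1 h2 h3 heq1 heq2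
end

section
/- Let f : ℂ → ℂ be differentiable on all of ℂ (entire) and not constant. Then for every real number c, the level set {z ∈ ℂ : Im(f(z)) = c} has measure zero with respect to the Lebesgue (volume) measure on ℂ. -/
/-!
Restricted to a horizontal or vertical line, `Im ∘ f` is a real-analytic function of one
variable, so it is either constant on that line or takes the value `c` only on a discrete, hence
null, set. By the open mapping theorem `Im ∘ f` is not constant, so some horizontal line carries
only a null set of `c`-points; every vertical line on which `Im ∘ f ≡ c` crosses it at such a
point, so these vertical lines have null abscissae, and Fubini's theorem finishes the proof.
-/

open Filter MeasureTheory Set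

theorem AnalyticOnNhd.measure_setOf_eq_eq_zero {E : Type*} [NormedAddCommGroup E]
    [NormedSpace ℝ E] {μ : Measure ℝ} [NullSingletonClass μ] {g : ℝ → E}
    (hg : AnalyticOnNhd ℝ g univ) {c : E} (hc : ∃ t, g t ≠ c) :
    μ {t | g t = c} = 0 := by
  obtain ⟨t₀, ht₀⟩ := hc
  have hcodiscrete : (fun t => g t - c) ⁻¹' {0}ᶜ ∈ codiscrete ℝ :=
    (hg.sub analyticOnNhd_const).preimage_zero_mem_codiscrete (sub_ne_zero.mpr ht₀)
  have hae := ae_restrict_le_codiscreteWithin (μ := μ) MeasurableSet.univ hcodiscrete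
  rw [Measure.restrict_univ] at hae
  exact compl_mem_ae_iff.mp (by simpa [Set.preimage, Set.compl_ofPred, sub_eq_zero] using hae)

theorem measure_prod_setOf_eq_eq_zero {E : Type*} [NormedAddCommGroup E] [NormedSpace ℝ E]
    {μ ν : Measure ℝ} [NullSingletonClass μ] [NullSingletonClass ν] [SFinite ν]
    {g : ℝ × ℝ → E} (hg : Continuous g)
    (hx : ∀ y, AnalyticOnNhd ℝ (fun x => g (x, y)) univ)
    (hy : ∀ x, AnalyticOnNhd ℝ (fun y => g (x, y)) univ) {c : E} (hc : ∃ p, g p ≠ c) :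
    μ.prod ν {p | g p = c} = 0 := by
  obtain ⟨⟨x₀, y₀⟩, hp⟩ := hc
  have hconst : μ {x | ∀ y, g (x, y) = c} = 0 :=
    measure_mono_null (fun x hx => hx y₀) ((hx y₀).measure_setOf_eq_eq_zero ⟨x₀, hp⟩)
  rw [Measure.measure_prod_null (isClosed_eq hg continuous_const).measurableSet]
  filter_upwards [measure_eq_zero_iff_ae_notMem.mp hconst] with x hx
  push Not at hx
  exact (hy x).measure_setOf_eq_eq_zero hx

theorem Differentiable.exists_im_ne {f : ℂ → ℂ} (hf : Differentiable ℂ f)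
    (hnc : ∃ z w : ℂ, f z ≠ f w) (c : ℝ) : ∃ z, (f z).im ≠ c := by
  by_contra! him
  obtain ⟨w, hw⟩ := (hf.differentiableOn.analyticOnNhd isOpen_univ).eq_const_of_im_eq_const
    (fun z _ => him z) isOpen_univ isConnected_univ
  obtain ⟨z₁, z₂, hne⟩ := hnc
  exact hne ((hw z₁ trivial).trans (hw z₂ trivial).symm)

/-- The level set of the imaginary part of a nonconstant entire function has
Lebesgue measure zero in the complex plane. -/
theorem imaginary_level_set_measure_zero (f : ℂ → ℂ)
    (hf : Differentiable ℂ f) (hnc : ∃ z w : ℂ, f z ≠ f w) (c : ℝ) :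
    MeasureTheory.volume {z : ℂ | (f z).im = c} = 0 := by
  set g : ℝ × ℝ → ℝ := fun p => (f (Complex.equivRealProdCLM.symm p)).im
  have hg : AnalyticOnNhd ℝ g univ := fun p _ =>
    (Complex.imCLM.analyticAt _).comp <| (hf.analyticAt _).restrictScalars.comp <|
      Complex.equivRealProdCLM.symm.toContinuousLinearMap.analyticAt p
  obtain ⟨z, hz⟩ := hf.exists_im_ne hnc c
  have hgz : g (Complex.equivRealProdCLM z) ≠ c := by
    simpa only [g, ContinuousLinearEquiv.symm_apply_apply] using hz
  rw [← Complex.volume_preserving_equiv_real_prod.symm.measure_preimage_equiv,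
    Measure.volume_eq_prod]
  exact measure_prod_setOf_eq_eq_zero (g := g) hg.continuous
    (fun y x _ => (hg _ trivial).comp (analyticAt_id.prod analyticAt_const))
    (fun x y _ => (hg _ trivial).comp (analyticAt_const.prod analyticAt_id))
    ⟨_, hgz⟩
end

section
/- Probability-zero reality of the computed distance: let X and Y be independent real-valued random variables on a probability space, each of whose laws is absolutely continuous with respect to the Lebesgue measure on ℝ, and set Z = X + iY. Then for every entire nonconstant function f : ℂ → ℂ and every real c, the probability that Im(f(Z)) = c is zero. -/
/-!
The law of `X + iY` is the image of the product of the laws of `X` and `Y` under `ℝ × ℝ ≃ ℂ`,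
hence absolutely continuous, so it suffices that the level set `f ⁻¹' {w | w.im = c}` is
Lebesgue-null. The critical points of `f` are the zeros of the nonzero entire function `f'`,
a countable set. Near any other point `f` has a differentiable local inverse, and differentiable
maps send null sets to null sets, so the part of the level set near that point, being the image
of a piece of the null line `{w | w.im = c}`, is null.
-/

open MeasureTheory ProbabilityTheory Set

theorem addHaar_preimage_inter_eq_zero_of_hasStrictFDerivAt {E : Type*} [NormedAddCommGroup E]
    [NormedSpace ℝ E] [FiniteDimensional ℝ E] [MeasurableSpace E] [BorelSpace E]
    (μ : Measure E) [μ.IsAddHaarMeasure] {f : E → E} {s t : Set E}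
    (hf : ∀ x ∈ t, ∃ f' : E ≃L[ℝ] E, HasStrictFDerivAt f (f' : E →L[ℝ] E) x) (hs : μ s = 0) :
    μ (f ⁻¹' s ∩ t) = 0 := by
  refine measure_null_of_locally_null _ fun x hx => ?_
  obtain ⟨f', hf'⟩ := hf x hx.2
  set e := hf'.toOpenPartialHomeomorph f
  have he : ⇑e = f := hf'.toOpenPartialHomeomorph_coe
  set u := f ⁻¹' s ∩ t ∩ e.source
  refine ⟨u, inter_mem_nhdsWithin _
    (e.open_source.mem_nhds hf'.mem_toOpenPartialHomeomorph_source), ?_⟩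
  have hu : e.symm '' (e '' u) = u := e.symm_image_image_of_subset_source inter_subset_right
  have himage : μ (e '' u) = 0 :=
    measure_mono_null (by rintro _ ⟨z, hz, rfl⟩; rw [he]; exact hz.1.1) hs
  have hsymm : DifferentiableOn ℝ e.symm (e '' u) := by
    rintro _ ⟨z, hz, rfl⟩
    obtain ⟨g', hg'⟩ := hf z hz.1.2
    rw [← he] at hg'
    refine (e.hasFDerivAt_symm (f' := g') (e.map_source hz.2) ?_).differentiableAt
      |>.differentiableWithinAt
    rw [e.left_inv hz.2]
    exact hg'.hasFDerivAt
  rw [← hu]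
  exact addHaar_image_eq_zero_of_differentiableOn_of_addHaar_eq_zero μ hsymm himage

theorem countable_setOf_deriv_eq_zero {f : ℂ → ℂ} (hf : Differentiable ℂ f)
    (hnc : ∃ z w : ℂ, f z ≠ f w) : {z | deriv f z = 0}.Countable := by
  have hanalytic : AnalyticOnNhd ℂ (deriv f) univ := fun z _ => hf.deriv.analyticAt z
  rcases hanalytic.eqOn_zero_or_eventually_ne_zero_of_preconnected isPreconnected_univ with h | h
  · obtain ⟨z, w, hzw⟩ := hnc
    exact absurd (is_const_of_deriv_eq_zero hf (fun z => h (mem_univ z)) z w) hzw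
  · have hdiscrete : IsDiscrete ({z | deriv f z = 0} ∩ univ) := isDiscrete_of_codiscreteWithin h
    simpa using (HereditarilyLindelofSpace.isLindelof _).countable hdiscrete.to_subtype

theorem volume_preimage_eq_zero_of_differentiable {f : ℂ → ℂ} (hf : Differentiable ℂ f)
    (hnc : ∃ z w : ℂ, f z ≠ f w) {s : Set ℂ} (hs : volume s = 0) : volume (f ⁻¹' s) = 0 := by
  have hregular : volume (f ⁻¹' s ∩ {z | deriv f z ≠ 0}) = 0 := by
    refine addHaar_preimage_inter_eq_zero_of_hasStrictFDerivAt volume (fun z hz => ?_) hs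
    refine ⟨(ContinuousLinearEquiv.unitsEquivAut ℂ (Units.mk0 _ hz)).restrictScalars ℝ, ?_⟩
    convert (hf.analyticAt z).hasStrictDerivAt.hasStrictFDerivAt.restrictScalars ℝ using 1
    ext
    simp
  have hcritical : volume {z | deriv f z = 0} = 0 :=
    (countable_setOf_deriv_eq_zero hf hnc).measure_zero _
  refine measure_mono_null (fun z hz => ?_) (measure_union_null hregular hcritical)
  by_cases h : deriv f z = 0
  · exact Or.inr h
  · exact Or.inl ⟨hz, h⟩

theorem Complex.volume_setOf_im_eq (c : ℝ) : volume {z : ℂ | z.im = c} = 0 := by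
  have : {z : ℂ | z.im = c} = Complex.measurableEquivRealProd ⁻¹' (univ ×ˢ {c}) := by
    ext z
    simp [Complex.measurableEquivRealProd_apply]
  rw [this, Complex.volume_preserving_equiv_real_prod.measure_preimage_equiv,
    Measure.volume_eq_prod, Measure.prod_prod, Real.volume_singleton, mul_zero]

theorem ProbabilityTheory.IndepFun.map_prod_absolutelyContinuous {Ω α β : Type*}
    [MeasurableSpace Ω] [MeasurableSpace α] [MeasurableSpace β] {μ : Measure Ω}
    [IsFiniteMeasure μ] {X : Ω → α} {Y : Ω → β} (hX : AEMeasurable X μ) (hY : AEMeasurable Y μ)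
    (hindep : IndepFun X Y μ) {ν₁ : Measure α} {ν₂ : Measure β} [SFinite ν₂]
    (hXac : μ.map X ≪ ν₁) (hYac : μ.map Y ≪ ν₂) :
    μ.map (fun ω => (X ω, Y ω)) ≪ ν₁.prod ν₂ := by
  rw [(indepFun_iff_map_prod_eq_prod_map_map hX hY).mp hindep]
  exact hXac.prod hYac

theorem map_ofReal_add_ofReal_mul_I_absolutelyContinuous {Ω : Type*} [MeasurableSpace Ω]
    {μ : Measure Ω} [IsFiniteMeasure μ] {X Y : Ω → ℝ} (hX : Measurable X) (hY : Measurable Y)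
    (hindep : IndepFun X Y μ) (hXac : μ.map X ≪ volume) (hYac : μ.map Y ≪ volume) :
    μ.map (fun ω => (X ω : ℂ) + Y ω * Complex.I) ≪ volume := by
  have hpair : Measurable fun ω => (X ω, Y ω) := hX.prodMk hY
  have hcomp : (fun ω => (X ω : ℂ) + Y ω * Complex.I)
      = Complex.measurableEquivRealProd.symm ∘ fun ω => (X ω, Y ω) := by
    funext ω
    simp [Complex.ext_iff, Complex.measurableEquivRealProd_symm_apply]
  rw [hcomp, ← Measure.map_map Complex.measurableEquivRealProd.symm.measurable hpair,
    ← (Complex.volume_preserving_equiv_real_prod.symm _).map_eq, Measure.volume_eq_prod]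
  exact (hindep.map_prod_absolutelyContinuous hX.aemeasurable hY.aemeasurable hXac hYac).map
    Complex.measurableEquivRealProd.symm.measurable

open MeasureTheory ProbabilityTheory in
/-- Probability-zero reality of the computed distance: if `Z = X + iY` with
`X`, `Y` independent real random variables having absolutely continuous laws,
then `Im (f Z) = c` with probability zero, for every nonconstant entire `f`. -/
theorem prob_imaginary_part_eq_zero {Ω : Type*} [MeasurableSpace Ω]
    (μ : Measure Ω) [IsProbabilityMeasure μ]
    (X Y : Ω → ℝ) (hX : Measurable X) (hY : Measurable Y)
    (hindep : IndepFun X Y μ)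
    (hXac : μ.map X ≪ volume) (hYac : μ.map Y ≪ volume)
    (f : ℂ → ℂ) (hf : Differentiable ℂ f) (hnc : ∃ z w : ℂ, f z ≠ f w) (c : ℝ) :
    μ {ω | (f ((X ω : ℂ) + (Y ω : ℂ) * Complex.I)).im = c} = 0 := by
  have hlevel : volume (f ⁻¹' {w | w.im = c}) = 0 :=
    volume_preimage_eq_zero_of_differentiable hf hnc (Complex.volume_setOf_im_eq c)
  have hZ : Measurable fun ω => (X ω : ℂ) + Y ω * Complex.I := by fun_prop
  have hlaw := map_ofReal_add_ofReal_mul_I_absolutelyContinuous hX hY hindep hXac hYac hlevel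
  exact nonpos_iff_eq_zero.mp ((Measure.le_map_apply hZ.aemeasurable _).trans_eq hlaw)
end

section
/- Both candidate distances real with probability zero: let X and Y be independent real-valued random variables on a probability space, each of whose laws is absolutely continuous with respect to the Lebesgue measure on ℝ, and set Z = X + iY. Then for every pair of entire nonconstant functions f, g : ℂ → ℂ, the probability that Im(f(Z)) = 0 and Im(g(Z)) = 0 simultaneously is zero. -/
/-! The event lies in `{Im f(Z) = 0}`. The map `(x, y) ↦ Im f(x + iy)` is real analytic on `ℝ²` and
not identically zero, since a holomorphic function with constant imaginary part is constant. The
zero set of such a function is null for every product of atomless measures: the zeros on a row where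
it does not vanish identically form a discrete, hence null, set, and off that set each column is
again not identically zero. Independence makes the law of `(X, Y)` such a product. -/

open MeasureTheory Set

theorem MeasureTheory.Measure.AbsolutelyContinuous.nullSingletonClass {α : Type*}
    [MeasurableSpace α] {μ ν : Measure α} [NullSingletonClass ν] (h : μ ≪ ν) :
    NullSingletonClass μ :=
  ⟨fun x => h (measure_singleton x)⟩

section ZeroSet

variable {𝕜 E : Type*} [NontriviallyNormedField 𝕜] [ConnectedSpace 𝕜]
  [SecondCountableTopology 𝕜] [MeasurableSpace 𝕜] [NormedAddCommGroup E] [NormedSpace 𝕜 E]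

theorem AnalyticOnNhd.measure_preimage_zero {φ : 𝕜 → E} (hφ : AnalyticOnNhd 𝕜 φ univ) {x : 𝕜}
    (hx : φ x ≠ 0) (ν : Measure 𝕜) [NullSingletonClass ν] : ν (φ ⁻¹' {0}) = 0 := by
  have h := ae_restrict_le_codiscreteWithin (μ := ν) MeasurableSet.univ
    (hφ.preimage_zero_mem_codiscrete hx)
  rwa [Measure.restrict_univ, mem_ae_iff, ← preimage_compl, compl_compl] at h

theorem AnalyticOnNhd.measure_prod_preimage_zero [OpensMeasurableSpace 𝕜] {F : 𝕜 × 𝕜 → E}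
    (hF : AnalyticOnNhd 𝕜 F univ) {p : 𝕜 × 𝕜} (hp : F p ≠ 0) (ν₁ ν₂ : Measure 𝕜)
    [NullSingletonClass ν₁] [NullSingletonClass ν₂] [SFinite ν₂] :
    (ν₁.prod ν₂) (F ⁻¹' {0}) = 0 := by
  have row : ∀ y, AnalyticOnNhd 𝕜 (fun x => F (x, y)) univ := fun y x _ =>
    (hF (x, y) trivial).comp (f := fun x => (x, y)) (analyticAt_id.prod analyticAt_const)
  have col : ∀ x, AnalyticOnNhd 𝕜 (fun y => F (x, y)) univ := fun x y _ =>
    (hF (x, y) trivial).comp (f := fun y => (x, y)) (analyticAt_const.prod analyticAt_id)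
  rw [Measure.measure_prod_null (isClosed_singleton.preimage hF.continuous).measurableSet]
  filter_upwards [measure_eq_zero_iff_ae_notMem.mp ((row p.2).measure_preimage_zero hp ν₁)]
    with x hx
  exact (col x).measure_preimage_zero hx ν₂

end ZeroSet

open Complex in
theorem Differentiable.analyticOnNhd_im_comp_add_mul_I {f : ℂ → ℂ} (hf : Differentiable ℂ f) :
    AnalyticOnNhd ℝ (fun p : ℝ × ℝ => (f (p.1 + p.2 * I)).im) univ := by
  have h : (fun p : ℝ × ℝ => (f (p.1 + p.2 * I)).im) = imCLM ∘ f ∘ equivRealProdCLM.symm := by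
    ext p
    simp [equivRealProdCLM_symm_apply]
  rw [h]
  exact fun p _ => imCLM.analyticAt _ |>.comp <|
    (hf.analyticAt _).restrictScalars.comp (equivRealProdCLM.symm.analyticAt p)

theorem Differentiable.exists_im_ne_zero {f : ℂ → ℂ} (hf : Differentiable ℂ f)
    (hnc : ∃ z w, f z ≠ f w) : ∃ z, (f z).im ≠ 0 := by
  by_contra! h
  obtain ⟨c, hc⟩ := AnalyticOnNhd.eq_const_of_im_eq_const
    (fun z _ => hf.analyticAt z) (fun z _ => h z) isOpen_univ isConnected_univ
  obtain ⟨z, w, hzw⟩ := hnc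
  exact hzw ((hc z trivial).trans (hc w trivial).symm)

open MeasureTheory ProbabilityTheory in
theorem prob_both_imaginary_parts_zero_general {Ω : Type*} [MeasurableSpace Ω]
    (μ : Measure Ω) [IsProbabilityMeasure μ]
    (X Y : Ω → ℝ) (hX : Measurable X) (hY : Measurable Y)
    (hindep : IndepFun X Y μ)
    (hXac : μ.map X ≪ volume) (hYac : μ.map Y ≪ volume)
    (f g : ℂ → ℂ) (hf : Differentiable ℂ f)
    (hncf : ∃ z w : ℂ, f z ≠ f w) :
    μ {ω | (f ((X ω : ℂ) + (Y ω : ℂ) * Complex.I)).im = 0 ∧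
           (g ((X ω : ℂ) + (Y ω : ℂ) * Complex.I)).im = 0} = 0 := by
  have hF := hf.analyticOnNhd_im_comp_add_mul_I
  obtain ⟨z, hz⟩ := hf.exists_im_ne_zero hncf
  have : NullSingletonClass (μ.map X) := hXac.nullSingletonClass
  have : NullSingletonClass (μ.map Y) := hYac.nullSingletonClass
  have hlaw : μ.map (fun ω => (X ω, Y ω)) = (μ.map X).prod (μ.map Y) :=
    (indepFun_iff_map_prod_eq_prod_map_map hX.aemeasurable hY.aemeasurable).mp hindep
  refine measure_mono_null (fun ω hω => hω.1) ?_
  have h := hF.measure_prod_preimage_zero (p := (z.re, z.im)) (by simpa using hz)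
    (μ.map X) (μ.map Y)
  rwa [← hlaw, Measure.map_apply (hX.prodMk hY)
    (isClosed_singleton.preimage hF.continuous).measurableSet] at h

open MeasureTheory ProbabilityTheory in
/-- Both candidate distances real with probability zero: if `Z = X + iY` with
`X`, `Y` independent real random variables having absolutely continuous laws,
then for nonconstant entire `f` and `g`, the event that both `Im (f Z) = 0`
and `Im (g Z) = 0` has probability zero. -/
theorem prob_both_imaginary_parts_zero {Ω : Type*} [MeasurableSpace Ω]
    (μ : Measure Ω) [IsProbabilityMeasure μ]
    (X Y : Ω → ℝ) (hX : Measurable X) (hY : Measurable Y)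
    (hindep : IndepFun X Y μ)
    (hXac : μ.map X ≪ volume) (hYac : μ.map Y ≪ volume)
    (f g : ℂ → ℂ) (hf : Differentiable ℂ f) (hg : Differentiable ℂ g)
    (hncf : ∃ z w : ℂ, f z ≠ f w) (hncg : ∃ z w : ℂ, g z ≠ g w) :
    μ {ω | (f ((X ω : ℂ) + (Y ω : ℂ) * Complex.I)).im = 0 ∧
           (g ((X ω : ℂ) + (Y ω : ℂ) * Complex.I)).im = 0} = 0 :=
  prob_both_imaginary_parts_zero_general μ X Y hX hY hindep hXac hYac f g hf hncf
end
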